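/- (Vizing's Adjacency Lemma) Let G be a critical graph and let xy be an edge of G. Then at least Δ(G) − d_G(y) + 1 vertices in N(x) \ {y} have degree Δ(G), where N(x) is the set of neighbors of x. -/

import Mathlib

/-!
Let `k = χ'(G) - 1 ≥ Δ(G)`. By criticality `G - xy` has a proper `k`-edge-coloring `c`, while
`G` has none. A fan at `x` is a sequence `y = z₀, z₁, …` of distinct neighbours of `x` in which
the color of `x z_{i+1}` is missing at `z_i`. Shifting colors down a fan shows that no color is
missing at both `x` and a fan vertex; swapping an `α/β` Kempe chain then shows that no color is
missing at two fan vertices, since the chain through `x` is a path with only two ends. So the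
colors missing at the vertices of the maximal fan `F` are pairwise distinct and each of them
colors an edge `x z` with `z ∈ F \ {y}`: `∑_{z ∈ F} (k - d_{G-xy}(z)) ≤ |F| - 1`. The summand
of `y` is `k - d(y) + 1 ≥ Δ - d(y) + 1`, and every other fan vertex of degree below `Δ`
contributes at least `1`, so at least `Δ - d(y) + 1` vertices of `F \ {y}` have degree `Δ`.
-/

open SimpleGraph

variable {V : Type*}

/-- `c` is a proper edge coloring of `G` using colors `0, …, n-1`:
every edge gets a color `< n`, and distinct edges sharing an endpoint
receive distinct colors. -/
def IsProperEdgeColoring (G : SimpleGraph V) (n : ℕ) (c : Sym2 V → ℕ) : Prop :=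
  (∀ e ∈ G.edgeSet, c e < n) ∧
    ∀ e₁ ∈ G.edgeSet, ∀ e₂ ∈ G.edgeSet, e₁ ≠ e₂ → (∃ v, v ∈ e₁ ∧ v ∈ e₂) →
      c e₁ ≠ c e₂

/-- The edge chromatic number `χ'(G)`: the least number of colors in a proper
edge coloring of `G`. -/
noncomputable def edgeChromaticNumber (G : SimpleGraph V) : ℕ :=
  sInf {n | ∃ c, IsProperEdgeColoring G n c}

/-- The degree `d_G(v)` of a vertex. -/
noncomputable def deg (G : SimpleGraph V) (v : V) : ℕ := (G.neighborSet v).ncard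

/-- The maximum vertex degree `Δ(G)`. -/
noncomputable def maxDeg (G : SimpleGraph V) : ℕ := sSup {d | ∃ v, deg G v = d}

/-- `G` is critical: it is class 2 (i.e. `χ'(G) ≠ Δ(G)`) and every proper
subgraph `H` of `G` satisfies `χ'(H) < χ'(G)`. -/
def IsCritical (G : SimpleGraph V) : Prop :=
  edgeChromaticNumber G ≠ maxDeg G ∧
    ∀ H : G.Subgraph, H ≠ ⊤ → edgeChromaticNumber H.coe < edgeChromaticNumber G

/-- `G` is `k`-critical: critical with maximum degree `k`. -/
def IsKCritical (G : SimpleGraph V) (k : ℕ) : Prop :=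
  IsCritical G ∧ maxDeg G = k


open Finset

section ProperColoring

variable {W : Type*} {G H : SimpleGraph V} {n m : ℕ} {c : Sym2 V → ℕ}

theorem isProperEdgeColoring_iff_adj :
    IsProperEdgeColoring G n c ↔ (∀ u v, G.Adj u v → c s(u, v) < n) ∧
      ∀ v u w, G.Adj v u → G.Adj v w → u ≠ w → c s(v, u) ≠ c s(v, w) := by
  refine ⟨fun ⟨hlt, hne⟩ => ⟨fun u v h => hlt _ h, fun v u w hu hw huw =>
    hne _ hu _ hw (Sym2.congr_right.not.2 huw) ⟨v, Sym2.mem_mk_left v u, Sym2.mem_mk_left v w⟩⟩,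
    fun ⟨hlt, hne⟩ => ⟨fun e he => ?_, fun e₁ he₁ e₂ he₂ h12 ⟨v, hv₁, hv₂⟩ => ?_⟩⟩
  · induction e with | _ u v => exact hlt u v he
  · obtain ⟨u, rfl⟩ := Sym2.mem_iff_exists.1 hv₁
    obtain ⟨w, rfl⟩ := Sym2.mem_iff_exists.1 hv₂
    exact hne v u w he₁ he₂ (fun h => h12 (h ▸ rfl))

theorem IsProperEdgeColoring.mono (hc : IsProperEdgeColoring G n c) (hHG : H ≤ G) (hnm : n ≤ m) :
    IsProperEdgeColoring H m c :=
  ⟨fun e he => (hc.1 e (edgeSet_mono hHG he)).trans_le hnm,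
    fun e₁ he₁ e₂ he₂ => hc.2 e₁ (edgeSet_mono hHG he₁) e₂ (edgeSet_mono hHG he₂)⟩

theorem IsProperEdgeColoring.comap {G' : SimpleGraph W} {c : Sym2 W → ℕ}
    (hc : IsProperEdgeColoring G' n c) (f : G →g G') (hf : Function.Injective f) :
    IsProperEdgeColoring G n (c ∘ Sym2.map f) := by
  rw [isProperEdgeColoring_iff_adj] at hc ⊢
  exact ⟨fun u v h => hc.1 _ _ (f.map_adj h),
    fun v u w hu hw huw => hc.2 _ _ _ (f.map_adj hu) (f.map_adj hw) (hf.ne huw)⟩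

theorem IsProperEdgeColoring.injOn_neighborSet (hc : IsProperEdgeColoring G n c) (v : V) :
    Set.InjOn (fun u => c s(v, u)) (G.neighborSet v) := fun u hu w hw huw => by
  by_contra h
  exact (isProperEdgeColoring_iff_adj.1 hc).2 v u w hu hw h huw

theorem IsProperEdgeColoring.deg_le [Finite V] (hc : IsProperEdgeColoring G n c) (v : V) :
    deg G v ≤ n := by
  have := Set.ncard_le_ncard_of_injOn (fun u => c s(v, u))
    (fun u hu => Finset.mem_coe.2 (mem_range.2 (hc.1 _ hu))) (hc.injOn_neighborSet v)
  rwa [Set.ncard_coe_finset, card_range] at this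

theorem exists_isProperEdgeColoring [Finite V] (G : SimpleGraph V) :
    ∃ n c, IsProperEdgeColoring G n c := by
  obtain ⟨n, ⟨e⟩⟩ := Finite.exists_equiv_fin (Sym2 V)
  exact ⟨n, fun s => e s, fun s _ => (e s).isLt,
    fun _ _ _ _ h _ => fun h' => h (e.injective (Fin.ext h'))⟩

theorem edgeChromaticNumber_le (hc : IsProperEdgeColoring G n c) : edgeChromaticNumber G ≤ n :=
  Nat.sInf_le ⟨c, hc⟩

theorem exists_isProperEdgeColoring_edgeChromaticNumber [Finite V] (G : SimpleGraph V) :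
    ∃ c, IsProperEdgeColoring G (edgeChromaticNumber G) c :=
  Nat.sInf_mem (exists_isProperEdgeColoring G)

theorem deg_le_maxDeg [Finite V] (G : SimpleGraph V) (v : V) : deg G v ≤ maxDeg G :=
  le_csSup (Set.finite_range (deg G)).bddAbove ⟨v, rfl⟩

theorem maxDeg_le_edgeChromaticNumber [Finite V] (G : SimpleGraph V) :
    maxDeg G ≤ edgeChromaticNumber G := by
  obtain ⟨c, hc⟩ := exists_isProperEdgeColoring_edgeChromaticNumber G
  exact csSup_le' (by rintro _ ⟨v, rfl⟩; exact hc.deg_le v)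

end ProperColoring

section MissingColors

variable {G H : SimpleGraph V} {k : ℕ} {c c' : Sym2 V → ℕ} {u v : V} {α : ℕ}

def IsMissingColor (G : SimpleGraph V) (c : Sym2 V → ℕ) (v : V) (α : ℕ) : Prop :=
  ∀ u, G.Adj v u → c s(v, u) ≠ α

theorem IsMissingColor.mono (h : IsMissingColor G c v α) (hHG : H ≤ G) :
    IsMissingColor H c v α :=
  fun u hu => h u (hHG hu)

theorem IsMissingColor.congr (h : IsMissingColor G c v α)
    (hcc : ∀ u, G.Adj v u → c' s(v, u) = c s(v, u)) : IsMissingColor G c' v α :=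
  fun u hu => hcc u hu ▸ h u hu

open Classical in
noncomputable def missingColors (G : SimpleGraph V) (c : Sym2 V → ℕ) (k : ℕ) (v : V) :
    Finset ℕ :=
  (range k).filter (IsMissingColor G c v)

theorem mem_missingColors : α ∈ missingColors G c k v ↔ α < k ∧ IsMissingColor G c v α := by
  simp [missingColors]

theorem le_card_missingColors_add_deg [Finite V] (G : SimpleGraph V) (c : Sym2 V → ℕ) (k : ℕ)
    (v : V) : k ≤ #(missingColors G c k v) + deg G v := by
  classical
  have := Fintype.ofFinite V
  have hcover : range k ⊆ missingColors G c k v ∪ (G.neighborSet v).toFinset.image (c s(v, ·)) := by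
    intro α hα
    by_cases hmiss : IsMissingColor G c v α
    · exact mem_union_left _ (mem_missingColors.2 ⟨mem_range.1 hα, hmiss⟩)
    · simp only [IsMissingColor, not_forall, not_not] at hmiss
      obtain ⟨u, hu, rfl⟩ := hmiss
      exact mem_union_right _ (mem_image_of_mem _ (Set.mem_toFinset.2 hu))
  calc k = #(range k) := (card_range k).symm
    _ ≤ _ := (card_le_card hcover).trans (card_union_le _ _)
    _ ≤ _ := by
      rw [deg, Set.ncard_eq_toFinset_card']
      exact Nat.add_le_add_left card_image_le _

theorem IsProperEdgeColoring.update_of_isMissingColor [DecidableEq V]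
    (hc : IsProperEdgeColoring (G.deleteEdges {s(u, v)}) k c) (huv : G.Adj u v) (hα : α < k)
    (hu : IsMissingColor (G.deleteEdges {s(u, v)}) c u α)
    (hv : IsMissingColor (G.deleteEdges {s(u, v)}) c v α) :
    IsProperEdgeColoring G k (Function.update c s(u, v) α) := by
  have hdel : ∀ {a b}, G.Adj a b → s(a, b) ≠ s(u, v) → (G.deleteEdges {s(u, v)}).Adj a b :=
    fun h hne => deleteEdges_adj.2 ⟨h, hne⟩
  rw [isProperEdgeColoring_iff_adj] at hc ⊢
  refine ⟨fun a b hab => ?_, fun a b w hab haw hbw => ?_⟩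
  · by_cases h : s(a, b) = s(u, v)
    · rwa [h, Function.update_self]
    · rw [Function.update_of_ne h]
      exact hc.1 a b (hdel hab h)
  -- only the recolored edge can clash, and at its ends the new color was missing
  have hclash : ∀ b w, G.Adj a b → G.Adj a w → b ≠ w → s(a, b) = s(u, v) →
      Function.update c s(u, v) α s(a, b) ≠ Function.update c s(u, v) α s(a, w) := by
    intro b w hab haw hbw h
    have hw : s(a, w) ≠ s(u, v) := fun h' => hbw (Sym2.congr_right.1 (h.trans h'.symm))
    rw [h, Function.update_self, Function.update_of_ne hw]
    have ha : a = u ∨ a = v := Sym2.mem_iff.1 (h ▸ Sym2.mem_mk_left a b)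
    rcases ha with rfl | rfl
    exacts [(hu w (hdel haw hw)).symm, (hv w (hdel haw hw)).symm]
  by_cases hb : s(a, b) = s(u, v)
  · exact hclash b w hab haw hbw hb
  by_cases hw : s(a, w) = s(u, v)
  · exact (hclash w b haw hab hbw.symm hw).symm
  rw [Function.update_of_ne hb, Function.update_of_ne hw]
  exact hc.2 a b w (hdel hab hb) (hdel haw hw) hbw

end MissingColors

section DeleteEdge

variable {G : SimpleGraph V} {x y v : V}

theorem deg_deleteEdges_add_one [Finite V] (hxy : G.Adj x y) :
    deg (G.deleteEdges {s(x, y)}) x + 1 = deg G x := by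
  have : (G.deleteEdges {s(x, y)}).neighborSet x = G.neighborSet x \ {y} := by
    ext u
    simp [deleteEdges_adj, hxy.ne]
  rw [deg, this, Set.ncard_sdiff_singleton_add_one (show y ∈ G.neighborSet x from hxy)]
  rfl

theorem deg_deleteEdges_of_ne (hvx : v ≠ x) (hvy : v ≠ y) :
    deg (G.deleteEdges {s(x, y)}) v = deg G v := by
  rw [deg, deg]
  congr 1
  ext u
  simp [deleteEdges_adj, hvx, hvy]

theorem exists_isMissingColor_of_adj [Finite V] (c : Sym2 V → ℕ) {k : ℕ} (hxy : G.Adj x y)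
    (hk : deg G x ≤ k) : ∃ β < k, IsMissingColor (G.deleteEdges {s(x, y)}) c x β := by
  obtain ⟨β, hβ⟩ : (missingColors (G.deleteEdges {s(x, y)}) c k x).Nonempty := by
    have := le_card_missingColors_add_deg (G.deleteEdges {s(x, y)}) c k x
    have := deg_deleteEdges_add_one hxy
    rw [← card_pos]
    omega
  exact ⟨β, mem_missingColors.1 hβ⟩

end DeleteEdge

theorem IsCritical.exists_isProperEdgeColoring_deleteEdges [Finite V] {G : SimpleGraph V}
    (hG : IsCritical G) {x y : V} (hxy : G.Adj x y) :
    ∃ k, maxDeg G ≤ k ∧ (¬∃ c, IsProperEdgeColoring G k c) ∧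
      ∃ c, IsProperEdgeColoring (G.deleteEdges {s(x, y)}) k c := by
  have hΔ : maxDeg G < edgeChromaticNumber G :=
    (maxDeg_le_edgeChromaticNumber G).lt_of_ne (Ne.symm hG.1)
  let G' : G.Subgraph := (⊤ : G.Subgraph).deleteEdges {s(x, y)}
  have hG' : G' ≠ ⊤ := fun h => by
    have : G'.Adj x y := h ▸ hxy
    simp [G'] at this
  have hlt := hG.2 G' hG'
  obtain ⟨c, hc⟩ := exists_isProperEdgeColoring_edgeChromaticNumber G'.coe
  let f : G.deleteEdges {s(x, y)} →g G'.coe :=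
    { toFun := fun v => ⟨v, by simp [G']⟩
      map_rel' := fun h => by
        simpa only [G', Subgraph.coe_adj, Subgraph.deleteEdges_adj, Subgraph.top_adj]
          using deleteEdges_adj.1 h }
  refine ⟨edgeChromaticNumber G - 1, by omega, fun ⟨c', hc'⟩ => ?_, _,
    (hc.comap f fun _ _ h => congrArg Subtype.val h).mono le_rfl (by omega)⟩
  have := edgeChromaticNumber_le hc'
  omega

theorem SimpleGraph.Connected.card_le_two_of_degree_le_one [Fintype V] {K : SimpleGraph V}
    [DecidableRel K.Adj] (hK : K.Connected) (hdeg : ∀ v, K.degree v ≤ 2) (s : Finset V)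
    (hs : ∀ v ∈ s, K.degree v ≤ 1) : #s ≤ 2 := by
  -- `∑ (2 - deg) = 2 |V| - 2 |E| ≤ 2` for a connected graph, and each vertex of `s` adds `≥ 1`
  have htree := hK.card_vert_le_card_edgeSet_add_one
  rw [Nat.card_eq_fintype_card, Nat.card_eq_fintype_card, ← edgeFinset_card] at htree
  have hsum : ∑ v, (2 - K.degree v) + ∑ v, K.degree v = 2 * Fintype.card V := by
    rw [← sum_add_distrib, sum_congr rfl fun v _ => Nat.sub_add_cancel (hdeg v), sum_const,
      card_univ, smul_eq_mul, mul_comm]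
  have hs' : #s • 1 ≤ ∑ v ∈ s, (2 - K.degree v) :=
    card_nsmul_le_sum s _ 1 fun v hv => by have := hs v hv; omega
  have hsub : ∑ v ∈ s, (2 - K.degree v) ≤ ∑ v, (2 - K.degree v) :=
    sum_le_sum_of_subset (subset_univ s)
  rw [K.sum_degrees_eq_twice_card_edges] at hsum
  rw [smul_eq_mul, mul_one] at hs'
  omega

theorem SimpleGraph.card_le_two_of_reachable_of_degree_le_one [Fintype V] {K : SimpleGraph V}
    [DecidableRel K.Adj] (hdeg : ∀ v, K.degree v ≤ 2) {a : V} (s : Finset V)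
    (hs : ∀ v ∈ s, K.degree v ≤ 1) (hreach : ∀ v ∈ s, K.Reachable a v) : #s ≤ 2 := by
  classical
  obtain ⟨C, hC⟩ : ∃ C : K.ConnectedComponent, ∀ v ∈ s, v ∈ C.supp :=
    ⟨K.connectedComponentMk a, fun v hv =>
      (ConnectedComponent.mem_supp_iff _ _).2 (ConnectedComponent.eq.2 (hreach v hv).symm)⟩
  have hdegC : ∀ v : C.supp, (K.induce C.supp).degree v = K.degree v := fun v =>
    degree_induce_of_neighborSet_subset fun _ hu => C.mem_supp_of_adj_mem_supp v.2 hu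
  have hconn : (K.induce C.supp).Connected := C.connected_toSimpleGraph
  have := hconn.card_le_two_of_degree_le_one (fun v => (hdegC v).trans_le (hdeg v))
    (s.subtype (· ∈ C.supp)) (fun v hv => (hdegC v).trans_le (hs v (mem_subtype.1 hv)))
  rwa [card_subtype, filter_true_of_mem hC] at this

section Kempe

variable {H : SimpleGraph V} {k : ℕ} {c : Sym2 V → ℕ} {α β γ : ℕ} {S : Set V} {u v : V}

def kempeGraph (H : SimpleGraph V) (c : Sym2 V → ℕ) (α β : ℕ) : SimpleGraph V where
  Adj u v := H.Adj u v ∧ (c s(u, v) = α ∨ c s(u, v) = β)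
  symm := ⟨fun u v h => by rwa [H.adj_comm, Sym2.eq_swap]⟩
  loopless := ⟨fun _ h => H.irrefl h.1⟩

theorem IsProperEdgeColoring.degree_kempeGraph_le (hc : IsProperEdgeColoring H k c)
    [Fintype ((kempeGraph H c α β).neighborSet v)] (T : Finset ℕ)
    (hT : ∀ u, (kempeGraph H c α β).Adj v u → c s(v, u) ∈ T) :
    (kempeGraph H c α β).degree v ≤ #T := by
  classical
  refine card_le_card_of_injOn (c s(v, ·)) (fun u hu => hT u (mem_neighborFinset _ _ _ |>.1 hu))
    fun u hu w hw huw => hc.injOn_neighborSet v ?_ ?_ huw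
  exacts [((mem_neighborFinset _ _ _).1 hu).1, ((mem_neighborFinset _ _ _).1 hw).1]

theorem IsProperEdgeColoring.degree_kempeGraph_le_one (hc : IsProperEdgeColoring H k c)
    [Fintype ((kempeGraph H c α β).neighborSet v)] (hγ : γ = α ∨ γ = β)
    (hv : IsMissingColor H c v γ) : (kempeGraph H c α β).degree v ≤ 1 := by
  classical
  refine (hc.degree_kempeGraph_le (({α, β} : Finset ℕ).erase γ) fun u ⟨hvu, hcol⟩ =>
    mem_erase.2 ⟨hv u hvu, by rcases hcol with h | h <;> simp [h]⟩).trans ?_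
  rw [card_erase_of_mem (by rcases hγ with rfl | rfl <;> simp)]
  have := card_le_two (a := α) (b := β)
  omega

theorem IsProperEdgeColoring.degree_kempeGraph_le_two (hc : IsProperEdgeColoring H k c) (v : V)
    [Fintype ((kempeGraph H c α β).neighborSet v)] :
    (kempeGraph H c α β).degree v ≤ 2 := by
  classical
  exact (hc.degree_kempeGraph_le {α, β} fun u ⟨_, h⟩ => by rcases h with h | h <;> simp [h]).trans
    card_le_two

open Classical in
/-- For `S` closed under `kempeGraph` adjacency this is a Kempe change. -/
noncomputable def kempeSwap (c : Sym2 V → ℕ) (α β : ℕ) (S : Set V) (e : Sym2 V) : ℕ :=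
  if ∃ v ∈ S, v ∈ e then Equiv.swap α β (c e) else c e

theorem kempeSwap_of_mem (hv : v ∈ S) (u : V) :
    kempeSwap c α β S s(v, u) = Equiv.swap α β (c s(v, u)) :=
  if_pos ⟨v, hv, Sym2.mem_mk_left v u⟩

theorem kempeSwap_of_notMem (hS : ∀ a b, (kempeGraph H c α β).Adj a b → a ∈ S → b ∈ S)
    (hv : v ∉ S) (hvu : H.Adj v u) : kempeSwap c α β S s(v, u) = c s(v, u) := by
  unfold kempeSwap
  split_ifs with h
  · obtain ⟨w, hwS, hw⟩ := h
    have hu : u ∈ S := by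
      rcases Sym2.mem_iff.1 hw with rfl | rfl
      exacts [absurd hwS hv, hwS]
    have hcol : ¬(c s(u, v) = α ∨ c s(u, v) = β) := fun hcol => hv (hS u v ⟨hvu.symm, hcol⟩ hu)
    rw [Sym2.eq_swap] at hcol
    exact Equiv.swap_apply_of_ne_of_ne (fun h => hcol (Or.inl h)) (fun h => hcol (Or.inr h))
  · rfl

theorem IsProperEdgeColoring.kempeSwap (hc : IsProperEdgeColoring H k c) (hα : α < k)
    (hβ : β < k) (hS : ∀ a b, (kempeGraph H c α β).Adj a b → a ∈ S → b ∈ S) :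
    IsProperEdgeColoring H k (kempeSwap c α β S) := by
  rw [isProperEdgeColoring_iff_adj] at hc ⊢
  refine ⟨fun u v huv => ?_, fun v u w hu hw huw => ?_⟩
  · by_cases hu : u ∈ S
    · rw [kempeSwap_of_mem hu, Equiv.swap_apply_def]
      split_ifs
      exacts [hβ, hα, hc.1 u v huv]
    · rw [kempeSwap_of_notMem hS hu huv]
      exact hc.1 u v huv
  · by_cases hv : v ∈ S
    · rw [kempeSwap_of_mem hv, kempeSwap_of_mem hv]
      exact (Equiv.swap α β).injective.ne (hc.2 v u w hu hw huw)
    · rw [kempeSwap_of_notMem hS hv hu, kempeSwap_of_notMem hS hv hw]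
      exact hc.2 v u w hu hw huw

theorem IsMissingColor.kempeSwap_of_notMem (h : IsMissingColor H c v γ)
    (hS : ∀ a b, (kempeGraph H c α β).Adj a b → a ∈ S → b ∈ S) (hv : v ∉ S) :
    IsMissingColor H (kempeSwap c α β S) v γ :=
  h.congr fun _ hvu => _root_.kempeSwap_of_notMem hS hv hvu

theorem IsMissingColor.kempeSwap_of_mem (h : IsMissingColor H c v α) (hv : v ∈ S) :
    IsMissingColor H (kempeSwap c α β S) v β := fun u hvu => by
  rw [_root_.kempeSwap_of_mem hv, Ne, Equiv.swap_apply_eq_iff, Equiv.swap_apply_right]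
  exact h u hvu

end Kempe

section Fan

variable {G H : SimpleGraph V} {c c' : Sym2 V → ℕ} {x y z : V} {L l : List V} {k α β : ℕ}

/-- Fan sequences at `x` starting from `y`, listed from the newest vertex back to `y`. -/
inductive IsFan (H : SimpleGraph V) (c : Sym2 V → ℕ) (x y : V) : List V → Prop
  | single : IsFan H c x y [y]
  | cons {u w : V} {l : List V} : IsFan H c x y (u :: l) → H.Adj x w → w ∉ u :: l →
      IsMissingColor H c u (c s(x, w)) → IsFan H c x y (w :: u :: l)

namespace IsFan

theorem adj_or_eq (hF : IsFan H c x y L) : ∀ v ∈ L, H.Adj x v ∨ v = y := by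
  induction hF with
  | single => simp
  | cons _ hxw _ _ ih =>
    intro v hv
    rcases List.mem_cons.1 hv with rfl | hv
    exacts [Or.inl hxw, ih v hv]

theorem ne_root (hF : IsFan H c x y L) (hxy : x ≠ y) : ∀ v ∈ L, v ≠ x := by
  rintro v hv rfl
  rcases hF.adj_or_eq v hv with h | h
  exacts [H.irrefl h, hxy h]

theorem exists_of_mem (hF : IsFan H c x y L) : ∀ v ∈ L, ∃ l, IsFan H c x y (v :: l) := by
  induction hF with
  | single => simpa using ⟨[], single⟩
  | cons hF hxw hw hmiss ih =>
    intro v hv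
    rcases List.mem_cons.1 hv with rfl | hv
    exacts [⟨_, hF.cons hxw hw hmiss⟩, ih v hv]

theorem congr (hF : IsFan H c x y L) (hcc : ∀ e, (∃ v ∈ L, v ∈ e) → c' e = c e) :
    IsFan H c' x y L := by
  induction hF with
  | single => exact single
  | @cons u w l _ hxw hw hmiss ih =>
    refine (ih fun e ⟨v, hv, hve⟩ => hcc e ⟨v, List.mem_cons_of_mem _ hv, hve⟩).cons hxw hw ?_
    rw [hcc _ ⟨w, List.mem_cons_self, Sym2.mem_mk_right x w⟩]
    exact hmiss.congr fun v _ =>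
      hcc _ ⟨u, List.mem_cons_of_mem _ List.mem_cons_self, Sym2.mem_mk_left u v⟩

theorem kempeSwap {S : Set V} (hF : IsFan H c x y L)
    (hS : ∀ a b, (kempeGraph H c α β).Adj a b → a ∈ S → b ∈ S) (hx : x ∉ S)
    (hβx : IsMissingColor H c x β) (hα : ∀ u ∈ L.tail, IsMissingColor H c u α → u ∉ S) :
    IsFan H (kempeSwap c α β S) x y L := by
  induction hF with
  | single => exact single
  | @cons u w l _ hxw hw hmiss ih =>
    refine (ih fun v hv => hα v (List.mem_cons_of_mem _ hv)).cons hxw hw ?_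
    rw [_root_.kempeSwap_of_notMem hS hx hxw]
    by_cases huS : u ∈ S
    · have hγα : c s(x, w) ≠ α := fun h => hα u List.mem_cons_self (h ▸ hmiss) huS
      intro v huv
      rw [_root_.kempeSwap_of_mem huS, Ne, Equiv.swap_apply_eq_iff,
        Equiv.swap_apply_of_ne_of_ne hγα (hβx w hxw)]
      exact hmiss v huv
    · exact hmiss.kempeSwap_of_notMem hS huS

end IsFan

theorem exists_isProperEdgeColoring_of_isFan (hxy : G.Adj x y)
    (hc : IsProperEdgeColoring (G.deleteEdges {s(x, y)}) k c)
    (hF : IsFan (G.deleteEdges {s(x, y)}) c x y (z :: l)) (hα : α < k)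
    (hx : IsMissingColor (G.deleteEdges {s(x, y)}) c x α)
    (hz : IsMissingColor (G.deleteEdges {s(x, y)}) c z α) :
    ∃ c', IsProperEdgeColoring G k c' := by
  classical
  induction l generalizing z c α with
  | nil =>
    cases hF
    exact ⟨_, hc.update_of_isMissingColor hxy hα hx hz⟩
  | cons u l ih =>
    obtain _ | ⟨hFu, hxz, hzl, hu⟩ := hF
    have hux : u ≠ x := hFu.ne_root hxy.ne u List.mem_cons_self
    have huz : u ≠ z := fun h => hzl (h ▸ List.mem_cons_self)
    have hoff : ∀ v, v ∈ s(x, z) → v = x ∨ v = z := fun v => Sym2.mem_iff.1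
    -- recolor `xz` with `α`; its old color is then missing at both `x` and `u`
    refine ih (c := Function.update c s(x, z) α) (z := u) (α := c s(x, z)) ?_ ?_ (hc.1 _ hxz) ?_ ?_
    · exact (hc.mono (deleteEdges_le _) le_rfl).update_of_isMissingColor hxz hα
        (hx.mono (deleteEdges_le _)) (hz.mono (deleteEdges_le _))
    · refine hFu.congr fun e ⟨v, hv, hve⟩ => Function.update_of_ne (fun h => ?_) _ _
      rcases hoff v (h ▸ hve) with rfl | rfl
      exacts [hFu.ne_root hxy.ne _ hv rfl, hzl hv]
    · intro w hxw
      by_cases hwz : w = z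
      · subst hwz
        rw [Function.update_self]
        exact fun h => hz x hxw.symm (by rw [Sym2.eq_swap, h])
      · rw [Function.update_of_ne (Sym2.congr_right.not.2 hwz)]
        exact (hc.injOn_neighborSet x).ne hxw hxz hwz
    · refine hu.congr fun v _ => Function.update_of_ne (fun h => ?_) _ _
      rcases hoff u (h ▸ Sym2.mem_mk_left u v) with h | h
      exacts [hux h, huz h]

theorem IsFan.exists_isFan_of_isMissingColor (hxy : G.Adj x y)
    (hG : ¬∃ c', IsProperEdgeColoring G k c')
    (hc : IsProperEdgeColoring (G.deleteEdges {s(x, y)}) k c)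
    (hF : IsFan (G.deleteEdges {s(x, y)}) c x y (z :: l)) (hα : α < k)
    (hz : IsMissingColor (G.deleteEdges {s(x, y)}) c z α) :
    ∃ w l', IsFan (G.deleteEdges {s(x, y)}) c x y (w :: l') ∧
      (G.deleteEdges {s(x, y)}).Adj x w ∧ c s(x, w) = α := by
  have hx : ¬IsMissingColor (G.deleteEdges {s(x, y)}) c x α := fun hx =>
    hG (exists_isProperEdgeColoring_of_isFan hxy hc hF hα hx hz)
  simp only [IsMissingColor, not_forall, not_not] at hx
  obtain ⟨w, hxw, rfl⟩ := hx
  by_cases hw : w ∈ z :: l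
  · obtain ⟨l', hl'⟩ := hF.exists_of_mem w hw
    exact ⟨w, l', hl', hxw, rfl⟩
  · exact ⟨w, z :: l, hF.cons hxw hw hz, hxw, rfl⟩

theorem IsFan.reachable_kempeGraph (hxy : G.Adj x y) (hG : ¬∃ c', IsProperEdgeColoring G k c')
    (hc : IsProperEdgeColoring (G.deleteEdges {s(x, y)}) k c) (hα : α < k) (hβ : β < k)
    (hβx : IsMissingColor (G.deleteEdges {s(x, y)}) c x β)
    (hF : IsFan (G.deleteEdges {s(x, y)}) c x y L) :
    ∀ z ∈ L, IsMissingColor (G.deleteEdges {s(x, y)}) c z α →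
      (kempeGraph (G.deleteEdges {s(x, y)}) c α β).Reachable x z := by
  -- if the `α/β`-chain of the newest vertex `z` avoided `x`, swapping it would leave `β`
  -- missing at both `x` and `z` while keeping the fan
  have head : ∀ {z l}, IsFan (G.deleteEdges {s(x, y)}) c x y (z :: l) →
      (∀ u ∈ l, IsMissingColor (G.deleteEdges {s(x, y)}) c u α →
        (kempeGraph (G.deleteEdges {s(x, y)}) c α β).Reachable x u) →
      IsMissingColor (G.deleteEdges {s(x, y)}) c z α →
      (kempeGraph (G.deleteEdges {s(x, y)}) c α β).Reachable x z := by
    intro z l hF hl hz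
    by_contra hxz
    let S := {v | (kempeGraph (G.deleteEdges {s(x, y)}) c α β).Reachable z v}
    have hS : ∀ a b, (kempeGraph (G.deleteEdges {s(x, y)}) c α β).Adj a b → a ∈ S → b ∈ S :=
      fun _ _ hab ha => ha.trans hab.reachable
    have hxS : x ∉ S := fun h => hxz h.symm
    exact hG (exists_isProperEdgeColoring_of_isFan hxy (hc.kempeSwap hα hβ hS)
      (hF.kempeSwap hS hxS hβx fun u hu hmiss huS => hxz ((hl u hu hmiss).trans huS.symm)) hβ
      (hβx.kempeSwap_of_notMem hS hxS) (hz.kempeSwap_of_mem (Reachable.refl z)))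
  induction hF with
  | single =>
    intro z hz
    rw [List.mem_singleton.1 hz]
    exact head single (by simp)
  | cons hF hxw hw hmiss ih =>
    intro z hz hzα
    rcases List.mem_cons.1 hz with rfl | hz
    exacts [head (hF.cons hxw hw hmiss) ih hzα, ih z hz hzα]

theorem disjoint_missingColors_of_isFan [Fintype V] (hxy : G.Adj x y)
    (hG : ¬∃ c', IsProperEdgeColoring G k c')
    (hc : IsProperEdgeColoring (G.deleteEdges {s(x, y)}) k c) (hβ : β < k)
    (hβx : IsMissingColor (G.deleteEdges {s(x, y)}) c x β) {z₁ z₂ : V} {l₁ l₂ : List V}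
    (hF₁ : IsFan (G.deleteEdges {s(x, y)}) c x y (z₁ :: l₁))
    (hF₂ : IsFan (G.deleteEdges {s(x, y)}) c x y (z₂ :: l₂)) (hne : z₁ ≠ z₂) :
    Disjoint (missingColors (G.deleteEdges {s(x, y)}) c k z₁)
      (missingColors (G.deleteEdges {s(x, y)}) c k z₂) := by
  classical
  refine disjoint_left.2 fun α h₁ h₂ => ?_
  rw [mem_missingColors] at h₁ h₂
  -- `x`, `z₁`, `z₂` would be three ends of the path formed by the `α/β`-chain of `x`
  have hx₁ : x ≠ z₁ := (hF₁.ne_root hxy.ne z₁ List.mem_cons_self).symm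
  have hx₂ : x ≠ z₂ := (hF₂.ne_root hxy.ne z₂ List.mem_cons_self).symm
  have := card_le_two_of_reachable_of_degree_le_one (K := kempeGraph _ c α β) (a := x)
    (fun v => hc.degree_kempeGraph_le_two v) {x, z₁, z₂}
    (by
      simp only [mem_insert, mem_singleton]
      rintro v (rfl | rfl | rfl)
      exacts [hc.degree_kempeGraph_le_one (Or.inr rfl) hβx,
        hc.degree_kempeGraph_le_one (Or.inl rfl) h₁.2,
        hc.degree_kempeGraph_le_one (Or.inl rfl) h₂.2])
    (by
      simp only [mem_insert, mem_singleton]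
      rintro v (rfl | rfl | rfl)
      exacts [Reachable.refl _,
        hF₁.reachable_kempeGraph hxy hG hc h₁.1 hβ hβx v List.mem_cons_self h₁.2,
        hF₂.reachable_kempeGraph hxy hG hc h₁.1 hβ hβx v List.mem_cons_self h₂.2])
  rw [card_insert_of_notMem (by simp [hx₁, hx₂]), card_pair hne] at this
  omega

end Fan

section Counting

variable [Fintype V] {G H : SimpleGraph V} {c : Sym2 V → ℕ} {x y z : V} {k : ℕ}

open Classical in
noncomputable def fanVertices (H : SimpleGraph V) (c : Sym2 V → ℕ) (x y : V) : Finset V :=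
  univ.filter fun z => ∃ l, IsFan H c x y (z :: l)

theorem mem_fanVertices : z ∈ fanVertices H c x y ↔ ∃ l, IsFan H c x y (z :: l) := by
  simp [fanVertices]

theorem sum_card_missingColors_fanVertices_le [DecidableEq V] (hxy : G.Adj x y)
    (hG : ¬∃ c', IsProperEdgeColoring G k c')
    (hc : IsProperEdgeColoring (G.deleteEdges {s(x, y)}) k c) {β : ℕ} (hβ : β < k)
    (hβx : IsMissingColor (G.deleteEdges {s(x, y)}) c x β) :
    ∑ z ∈ fanVertices (G.deleteEdges {s(x, y)}) c x y,
        #(missingColors (G.deleteEdges {s(x, y)}) c k z) ≤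
      #((fanVertices (G.deleteEdges {s(x, y)}) c x y).erase y) := by
  rw [← card_biUnion fun z₁ h₁ z₂ h₂ hne => by
    obtain ⟨l₁, hF₁⟩ := mem_fanVertices.1 h₁
    obtain ⟨l₂, hF₂⟩ := mem_fanVertices.1 h₂
    exact disjoint_missingColors_of_isFan hxy hG hc hβ hβx hF₁ hF₂ hne]
  -- every color missing at a fan vertex is the color of an edge `xw`, `w ≠ y` a fan vertex
  refine (card_le_card fun α hα => ?_).trans (card_image_le (f := fun w => c s(x, w)))
  obtain ⟨z, hz, hαz⟩ := mem_biUnion.1 hα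
  obtain ⟨l, hF⟩ := mem_fanVertices.1 hz
  rw [mem_missingColors] at hαz
  obtain ⟨w, l', hFw, hxw, rfl⟩ := hF.exists_isFan_of_isMissingColor hxy hG hc hαz.1 hαz.2
  have hwy : w ≠ y := by
    rintro rfl
    exact (deleteEdges_adj.1 hxw).2 rfl
  exact mem_image_of_mem _ (mem_erase.2 ⟨hwy, mem_fanVertices.2 ⟨l', hFw⟩⟩)

theorem maxDeg_sub_deg_add_one_le_card_fanVertices [DecidableEq V] (hxy : G.Adj x y)
    (hG : ¬∃ c', IsProperEdgeColoring G k c')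
    (hc : IsProperEdgeColoring (G.deleteEdges {s(x, y)}) k c) (hk : maxDeg G ≤ k) :
    maxDeg G - deg G y + 1 ≤
      #(((fanVertices (G.deleteEdges {s(x, y)}) c x y).erase y).filter
        fun z => deg G z = maxDeg G) := by
  have hmiss := le_card_missingColors_add_deg (G.deleteEdges {s(x, y)}) c k
  obtain ⟨β, hβ, hβx⟩ := exists_isMissingColor_of_adj c hxy ((deg_le_maxDeg G x).trans hk)
  have hsum := sum_card_missingColors_fanVertices_le hxy hG hc hβ hβx
  rw [← add_sum_erase _ _ (mem_fanVertices.2 ⟨[], .single⟩)] at hsum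
  set Z := fanVertices (G.deleteEdges {s(x, y)}) c x y
  have hy : maxDeg G - deg G y + 1 ≤ #(missingColors (G.deleteEdges {s(x, y)}) c k y) := by
    have := hmiss y
    have := deg_deleteEdges_add_one hxy.symm
    rw [Sym2.eq_swap] at this
    have := deg_le_maxDeg G y
    omega
  have hz : ∀ z ∈ Z.erase y, (if deg G z = maxDeg G then 0 else 1) ≤
      #(missingColors (G.deleteEdges {s(x, y)}) c k z) := by
    intro z hz
    obtain ⟨hzy, hzZ⟩ := mem_erase.1 hz
    obtain ⟨l, hF⟩ := mem_fanVertices.1 hzZ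
    have := hmiss z
    rw [deg_deleteEdges_of_ne (hF.ne_root hxy.ne z List.mem_cons_self) hzy] at this
    have := deg_le_maxDeg G z
    split_ifs <;> omega
  have hlow : #((Z.erase y).filter fun z => ¬deg G z = maxDeg G) ≤
      ∑ z ∈ Z.erase y, #(missingColors (G.deleteEdges {s(x, y)}) c k z) := by
    rw [card_filter]
    exact sum_le_sum fun z hz' => by have := hz z hz'; split_ifs at this ⊢ <;> omega
  have := card_filter_add_card_filter_not (s := Z.erase y) fun z => deg G z = maxDeg G
  omega

end Counting

/-- Vizing's Adjacency Lemma: if `G` is critical and `xy ∈ E(G)`, then at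
least `Δ(G) − d_G(y) + 1` vertices in `N(x) \ {y}` have degree `Δ(G)`. -/
theorem vizing_adjacency_lemma [Fintype V] (G : SimpleGraph V)
    (hG : IsCritical G) {x y : V} (hxy : G.Adj x y) :
    maxDeg G - deg G y + 1 ≤
      {z | z ∈ G.neighborSet x ∧ z ≠ y ∧ deg G z = maxDeg G}.ncard := by
  classical
  obtain ⟨k, hk, hG', c, hc⟩ := hG.exists_isProperEdgeColoring_deleteEdges hxy
  refine (maxDeg_sub_deg_add_one_le_card_fanVertices hxy hG' hc hk).trans ?_
  rw [← Set.ncard_coe_finset]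
  refine Set.ncard_le_ncard (fun z hz => ?_)
  simp only [coe_filter, mem_erase, Set.mem_ofPred_eq] at hz
  obtain ⟨⟨hzy, hzZ⟩, hdeg⟩ := hz
  obtain ⟨l, hF⟩ := mem_fanVertices.1 hzZ
  have hxz := (hF.adj_or_eq z List.mem_cons_self).resolve_right hzy
  exact ⟨(deleteEdges_adj.1 hxz).1, hzy, hdeg⟩
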